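/- Let f(X) = a_0 + a_1 X + ... + a_n X^n ∈ Z[X] with a_0 a_n ≠ 0. Suppose there exist two distinct primes p and q and two indices j_1, j_2 with j_1 < min(j_2, n − j_2), such that: (i) p does not divide a_i for all i ≤ j_1, p divides a_i for all i > j_1, and p^2 does not divide a_n; (ii) q divides a_i for all i ≠ j_2, q does not divide a_{j_2}, q^2 does not divide a_0, and q^2 does not divide a_n. Then f is irreducible over Q. -/

import Mathlib

/-!
By Gauss's lemma it suffices to rule out a factorization `f = g * h` over `ℤ` with both factors
nonconstant. Modulo `q`, `f` is the monomial `a_{j₂} X^{j₂}`, so `g` and `h` reduce to monomials.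
As `q² ∤ a_n`, one factor, say `g`, has leading coefficient prime to `q`; its reduction then has
full degree `deg g > 0`, so `q ∣ g(0)`, and `q² ∤ a_0` forces `q ∤ h(0)`: the reduction of `h` is
a constant and `deg g = j₂`. Hence the degrees of the factors are `j₂` and `n - j₂`. Modulo `p`,
`f` has degree `j₁`, and as `p² ∤ a_n` some factor keeps its degree modulo `p`, so that factor has
degree at most `j₁ < min j₂ (n - j₂)`.
-/

open Polynomial Finset

theorem not_dvd_or_not_dvd_of_not_sq_dvd_mul {M : Type*} [CommMonoid M] {p a b : M}
    (h : ¬ p ^ 2 ∣ a * b) : ¬ p ∣ a ∨ ¬ p ∣ b := by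
  by_contra! hab
  exact h (sq p ▸ mul_dvd_mul hab.1 hab.2)

theorem Int.castRingHom_zmod_eq_zero_iff_dvd {p : ℕ} {a : ℤ} :
    Int.castRingHom (ZMod p) a = 0 ↔ (p : ℤ) ∣ a := by
  rw [eq_intCast, ZMod.intCast_zmod_eq_zero_iff_dvd]

namespace Polynomial

theorem coeff_sum_range_C_mul_X_pow {R : Type*} [Semiring R] (n : ℕ) (a : ℕ → R) (k : ℕ) :
    (∑ i ∈ range (n + 1), C (a i) * X ^ i).coeff k = if k ≤ n then a k else 0 := by
  simp

section Map

variable {R S : Type*} [Semiring R] [Semiring S] (φ : R →+* S) {f : R[X]} {j : ℕ}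

theorem map_eq_C_mul_X_pow_of_coeff_eq_zero (hf : ∀ i ≠ j, φ (f.coeff i) = 0) :
    f.map φ = C (φ (f.coeff j)) * X ^ j := by
  ext i
  rw [coeff_map, coeff_C_mul_X_pow]
  split_ifs with hi
  · rw [hi]
  · exact hf i hi

theorem natDegree_map_eq_of_coeff_eq_zero (hf : ∀ i, j < i → φ (f.coeff i) = 0)
    (hj : φ (f.coeff j) ≠ 0) : (f.map φ).natDegree = j :=
  natDegree_eq_of_le_of_coeff_ne_zero
    ((natDegree_le_iff_coeff_eq_zero).mpr fun i hi => by rw [coeff_map]; exact hf i hi)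
    (by rwa [coeff_map])

end Map

theorem natDegree_le_natDegree_map_mul {R S : Type*} [CommSemiring R] [CommSemiring S]
    [NoZeroDivisors S] (φ : R →+* S) {g h : R[X]} (hg : φ g.leadingCoeff ≠ 0)
    (hgh : (g * h).map φ ≠ 0) : g.natDegree ≤ ((g * h).map φ).natDegree := by
  rw [← natDegree_map_of_leadingCoeff_ne_zero φ hg]
  exact natDegree_le_of_dvd (Polynomial.map_dvd φ (dvd_mul_right g h)) hgh

section Monomial

variable {K : Type*} [Semiring K] [NoZeroDivisors K] {G H : K[X]} {c : K} {j : ℕ}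

theorem natDegree_add_natDegree_of_mul_eq_C_mul_X_pow (hc : c ≠ 0) (hGH : G * H = C c * X ^ j) :
    G.natDegree + H.natDegree = j ∧ G.natTrailingDegree + H.natTrailingDegree = j := by
  have hne : G * H ≠ 0 := by rw [hGH, C_mul_X_pow_eq_monomial, Ne, monomial_eq_zero_iff]; exact hc
  obtain ⟨hG, hH⟩ := mul_ne_zero_iff.mp hne
  rw [← natDegree_mul hG hH, ← natTrailingDegree_mul hG hH, hGH, C_mul_X_pow_eq_monomial,
    natDegree_monomial_eq j hc, natTrailingDegree_monomial hc]
  exact ⟨rfl, rfl⟩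

theorem natTrailingDegree_eq_natDegree_of_mul_eq_C_mul_X_pow (hc : c ≠ 0)
    (hGH : G * H = C c * X ^ j) : G.natTrailingDegree = G.natDegree := by
  have := natDegree_add_natDegree_of_mul_eq_C_mul_X_pow hc hGH
  have := natTrailingDegree_le_natDegree G
  have := natTrailingDegree_le_natDegree H
  omega

theorem natDegree_eq_of_mul_eq_C_mul_X_pow (hc : c ≠ 0) (hGH : G * H = C c * X ^ j)
    (hH : H.coeff 0 ≠ 0) : G.natDegree = j := by
  have := natDegree_add_natDegree_of_mul_eq_C_mul_X_pow hc hGH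
  have := natTrailingDegree_le_natDegree G
  have : H.natTrailingDegree = 0 := natTrailingDegree_eq_zero.mpr (Or.inr hH)
  omega

theorem coeff_zero_eq_zero_of_mul_eq_C_mul_X_pow (hc : c ≠ 0) (hGH : G * H = C c * X ^ j)
    (hG : 0 < G.natDegree) : G.coeff 0 = 0 :=
  coeff_eq_zero_of_lt_natTrailingDegree
    (by rwa [natTrailingDegree_eq_natDegree_of_mul_eq_C_mul_X_pow hc hGH])

end Monomial

theorem irreducible_map_of_forall_natDegree_pos {R K : Type*} [CommRing R] [IsDomain R]
    [NormalizedGCDMonoid R] [Field K] [Algebra R K] [IsFractionRing R K] {f : R[X]}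
    (hf : 0 < f.natDegree)
    (hfac : ∀ g h : R[X], f = g * h → 0 < g.natDegree → 0 < h.natDegree → False) :
    Irreducible (f.map (algebraMap R K)) := by
  have hc : f.content ≠ 0 := content_eq_zero_iff.not.mpr (ne_zero_of_natDegree_gt hf)
  have hprim := f.isPrimitive_primPart
  have isUnit_of_dvd {g : R[X]} (hg : g ∣ f.primPart) (hg0 : g.natDegree = 0) : IsUnit g := by
    rw [eq_C_of_natDegree_eq_zero hg0] at hg ⊢
    exact isUnit_C.mpr (hprim _ hg)
  have hirr : Irreducible f.primPart := by
    refine ⟨fun hu => ?_, fun g h hgh => ?_⟩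
    · have := natDegree_eq_zero_of_isUnit hu
      rw [natDegree_primPart] at this
      omega
    · by_contra! hgh'
      refine hfac (C f.content * g) h ?_ ?_ ?_
      · rw [mul_assoc, ← hgh, ← eq_C_content_mul_primPart]
      · rw [natDegree_C_mul hc]
        exact Nat.pos_of_ne_zero fun h0 => hgh'.1 (isUnit_of_dvd ⟨h, hgh⟩ h0)
      · exact Nat.pos_of_ne_zero fun h0 => hgh'.2 (isUnit_of_dvd ⟨g, hgh.trans (mul_comm g h)⟩ h0)
  rw [eq_C_content_mul_primPart f, Polynomial.map_mul, map_C, irreducible_isUnit_mul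
    (isUnit_C.mpr ((IsFractionRing.injective R K).ne_iff' (map_zero _) |>.mpr hc).isUnit)]
  exact hprim.irreducible_iff_irreducible_map_fraction_map.mp hirr

section ModPrime

variable {p : ℕ} [Fact p.Prime] {g h : ℤ[X]} {j : ℕ}

theorem natDegree_le_or_natDegree_le_of_dvd_coeff (hlc : ¬ (p : ℤ) ^ 2 ∣ (g * h).leadingCoeff)
    (hdvd : ∀ i, j < i → (p : ℤ) ∣ (g * h).coeff i) (hj : ¬ (p : ℤ) ∣ (g * h).coeff j) :
    g.natDegree ≤ j ∨ h.natDegree ≤ j := by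
  have hj' : Int.castRingHom (ZMod p) ((g * h).coeff j) ≠ 0 :=
    Int.castRingHom_zmod_eq_zero_iff_dvd.not.mpr hj
  have hmap : ((g * h).map (Int.castRingHom (ZMod p))).natDegree = j :=
    natDegree_map_eq_of_coeff_eq_zero _
      (fun i hi => Int.castRingHom_zmod_eq_zero_iff_dvd.mpr (hdvd i hi)) hj'
  have hne : (g * h).map (Int.castRingHom (ZMod p)) ≠ 0 := fun h0 =>
    hj' (by rw [← coeff_map, h0, coeff_zero])
  rw [← hmap]
  rw [leadingCoeff_mul] at hlc
  refine (not_dvd_or_not_dvd_of_not_sq_dvd_mul hlc).imp (fun hg => ?_) (fun hh => ?_)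
  · exact natDegree_le_natDegree_map_mul _ (Int.castRingHom_zmod_eq_zero_iff_dvd.not.mpr hg) hne
  · rw [mul_comm] at hne ⊢
    exact natDegree_le_natDegree_map_mul _ (Int.castRingHom_zmod_eq_zero_iff_dvd.not.mpr hh) hne

theorem natDegree_eq_of_map_mul_eq_C_mul_X_pow {c : ZMod p} (hc : c ≠ 0)
    (hgh : (g * h).map (Int.castRingHom (ZMod p)) = C c * X ^ j)
    (hlc : ¬ (p : ℤ) ∣ g.leadingCoeff) (hg : 0 < g.natDegree)
    (h0 : ¬ (p : ℤ) ^ 2 ∣ (g * h).coeff 0) : g.natDegree = j := by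
  rw [Polynomial.map_mul] at hgh
  have hdeg : (g.map (Int.castRingHom (ZMod p))).natDegree = g.natDegree :=
    natDegree_map_of_leadingCoeff_ne_zero _ (Int.castRingHom_zmod_eq_zero_iff_dvd.not.mpr hlc)
  have hg0 : (p : ℤ) ∣ g.coeff 0 := by
    rw [← Int.castRingHom_zmod_eq_zero_iff_dvd, ← coeff_map]
    exact coeff_zero_eq_zero_of_mul_eq_C_mul_X_pow hc hgh (hdeg ▸ hg)
  have hh0 : ¬ (p : ℤ) ∣ h.coeff 0 := fun hh0 => h0 (by
    rw [mul_coeff_zero, sq]; exact mul_dvd_mul hg0 hh0)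
  rw [← hdeg]
  refine natDegree_eq_of_mul_eq_C_mul_X_pow hc hgh ?_
  rw [coeff_map]
  exact Int.castRingHom_zmod_eq_zero_iff_dvd.not.mpr hh0

theorem natDegree_eq_or_natDegree_eq_of_dvd_coeff (hdvd : ∀ i ≠ j, (p : ℤ) ∣ (g * h).coeff i)
    (hj : ¬ (p : ℤ) ∣ (g * h).coeff j) (hlc : ¬ (p : ℤ) ^ 2 ∣ (g * h).leadingCoeff)
    (h0 : ¬ (p : ℤ) ^ 2 ∣ (g * h).coeff 0) (hg : 0 < g.natDegree) (hh : 0 < h.natDegree) :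
    g.natDegree = j ∨ h.natDegree = j := by
  obtain ⟨c, hc, hmap⟩ :
      ∃ c : ZMod p, c ≠ 0 ∧ (g * h).map (Int.castRingHom (ZMod p)) = C c * X ^ j :=
    ⟨_, Int.castRingHom_zmod_eq_zero_iff_dvd.not.mpr hj,
      map_eq_C_mul_X_pow_of_coeff_eq_zero _ fun i hi =>
        Int.castRingHom_zmod_eq_zero_iff_dvd.mpr (hdvd i hi)⟩
  rw [leadingCoeff_mul] at hlc
  refine (not_dvd_or_not_dvd_of_not_sq_dvd_mul hlc).imp (fun hlcg => ?_) (fun hlch => ?_)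
  · exact natDegree_eq_of_map_mul_eq_C_mul_X_pow hc hmap hlcg hg h0
  · rw [mul_comm] at hmap h0
    exact natDegree_eq_of_map_mul_eq_C_mul_X_pow hc hmap hlch hh h0

end ModPrime

end Polynomial

theorem corollary_1_34_general (n : ℕ) (a : ℕ → ℤ)
    (p q : ℕ) (hp : p.Prime) (hq : q.Prime)
    (j₁ j₂ : ℕ) (hj : j₁ < min j₂ (n - j₂))
    (hp1 : ∀ i ≤ j₁, ¬ (p : ℤ) ∣ a i)
    (hp2 : ∀ i, j₁ < i → i ≤ n → (p : ℤ) ∣ a i)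
    (hp3 : ¬ (p : ℤ)^2 ∣ a n)
    (hq1 : ∀ i ≤ n, i ≠ j₂ → (q : ℤ) ∣ a i)
    (hq2 : ¬ (q : ℤ) ∣ a j₂)
    (hq3 : ¬ (q : ℤ)^2 ∣ a 0) (hq4 : ¬ (q : ℤ)^2 ∣ a n) :
    Irreducible ((∑ i ∈ range (n+1), C (a i) * X ^ i).map (Int.castRingHom ℚ)) := by
  have := Fact.mk hp
  have := Fact.mk hq
  set f := ∑ i ∈ range (n+1), C (a i) * X ^ i
  have hcoeff : ∀ k, f.coeff k = if k ≤ n then a k else 0 := coeff_sum_range_C_mul_X_pow n a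
  have hcoeff_le {k} (hk : k ≤ n) : f.coeff k = a k := by rw [hcoeff, if_pos hk]
  have hdvd_coeff {r : ℤ} {k} (hk : k ≤ n → r ∣ a k) : r ∣ f.coeff k := by
    rw [hcoeff]; split_ifs with h; exacts [hk h, dvd_zero r]
  have hdeg : f.natDegree = n := natDegree_eq_of_le_of_coeff_ne_zero
    (natDegree_le_iff_coeff_eq_zero.mpr fun k hk => by rw [hcoeff, if_neg hk.not_ge])
    (by rw [hcoeff_le le_rfl]; rintro h0; exact hp3 (h0 ▸ dvd_zero _))
  have hlc : f.leadingCoeff = a n := by rw [leadingCoeff, hdeg, hcoeff_le le_rfl]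
  rw [lt_min_iff] at hj
  refine irreducible_map_of_forall_natDegree_pos (by omega) fun g h hgh hg hh => ?_
  have hsum : g.natDegree + h.natDegree = n := by
    rw [← hdeg, hgh, natDegree_mul (ne_zero_of_natDegree_gt hg) (ne_zero_of_natDegree_gt hh)]
  rw [hgh] at hcoeff_le hdvd_coeff hlc
  have hdeg_q := natDegree_eq_or_natDegree_eq_of_dvd_coeff
    (fun i hi => hdvd_coeff fun hin => hq1 i hin hi) (hcoeff_le (k := j₂) (by omega) ▸ hq2)
    (hlc ▸ hq4) (hcoeff_le (Nat.zero_le n) ▸ hq3) hg hh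
  have hdeg_p := natDegree_le_or_natDegree_le_of_dvd_coeff (hlc ▸ hp3)
    (fun i hi => hdvd_coeff (hp2 i hi)) (hcoeff_le (k := j₁) (by omega) ▸ hp1 j₁ le_rfl)
  omega

theorem corollary_1_34 (n : ℕ) (hn : 1 ≤ n) (a : ℕ → ℤ)
    (ha0 : a 0 ≠ 0) (han : a n ≠ 0)
    (p q : ℕ) (hp : p.Prime) (hq : q.Prime) (hpq : p ≠ q)
    (j₁ j₂ : ℕ) (hj : j₁ < min j₂ (n - j₂))
    (hp1 : ∀ i ≤ j₁, ¬ (p : ℤ) ∣ a i)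
    (hp2 : ∀ i, j₁ < i → i ≤ n → (p : ℤ) ∣ a i)
    (hp3 : ¬ (p : ℤ)^2 ∣ a n)
    (hq1 : ∀ i ≤ n, i ≠ j₂ → (q : ℤ) ∣ a i)
    (hq2 : ¬ (q : ℤ) ∣ a j₂)
    (hq3 : ¬ (q : ℤ)^2 ∣ a 0) (hq4 : ¬ (q : ℤ)^2 ∣ a n) :
    Irreducible ((∑ i ∈ range (n+1), C (a i) * X ^ i).map (Int.castRingHom ℚ)) :=
  corollary_1_34_general n a p q hp hq j₁ j₂ hj hp1 hp2 hp3 hq1 hq2 hq3 hq4
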